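/- arXiv:2408.04090 — 2 statements merged into one kernel-verified Lean document; each statement's English description precedes it below -/
import Mathlib

section
/- Let N ≥ 1, let λ be a σ-finite Borel measure on ℝ^N, let M > 0 and let r : ℝ^N → (0, ∞) be measurable with r(x) ≤ M for all x, and let β ≥ 2 be such that for every x ∈ ℝ^N, sup{ r(x+v) : |v| ≤ 2M } ≤ (β−1)·r(x). Then for every α ≥ 0 and all measurable φ, ψ : ℝ^N → ℝ with ∫ φ^2 dλ ≤ 1 and ∫ ψ^2 dλ ≤ 1, one has ∫_{ℝ^N} ∫_{ℝ^N} |x−y|^α · 1{|x−y| ≤ r(x)+r(y)} · |φ(x)| · |ψ(y)| dλ(y) dλ(x) ≤ β^α · esssup_{x ∈ ℝ^N} ( r(x)^α · λ(B̄(x, β·r(x))) ), understood in [0,∞]. -/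
/-!
The kernel `K(x, y) = |x - y|^α 1{|x - y| ≤ r(x) + r(y)}` is symmetric, and the regularity of `r`
confines its support in `y` to the ball `B̄(x, β r(x))`, where `K(x, ·) ≤ (β r(x))^α`. Hence every
row integral `∫ K(x, y) dλ(y)` is at most `β^α r(x)^α λ(B̄(x, β r(x)))`, and the Schur test
(pointwise AM-GM `2|φ(x)||ψ(y)| ≤ φ(x)² + ψ(y)²` followed by Tonelli) bounds the bilinear form by
the essential supremum of the row integrals.
-/

open Real MeasureTheory ENNReal Function Metric

lemma ENNReal.two_mul_le_add_sq (a b : ℝ≥0∞) : 2 * a * b ≤ a ^ 2 + b ^ 2 := by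
  rcases eq_or_ne a ⊤ with rfl | ha
  · simp
  rcases eq_or_ne b ⊤ with rfl | hb
  · simp
  lift a to NNReal using ha
  lift b to NNReal using hb
  exact_mod_cast _root_.two_mul_le_add_sq a b

section SchurTest

variable {X Y : Type*} [MeasurableSpace X] [MeasurableSpace Y]
  {μ : Measure X} {ν : Measure Y} [SFinite μ] [SFinite ν]

theorem lintegral_lintegral_mul_le_of_schur {K : X → Y → ℝ≥0∞} (hK : Measurable (uncurry K))
    {C : ℝ≥0∞} (hrow : ∀ᵐ x ∂μ, ∫⁻ y, K x y ∂ν ≤ C) (hcol : ∀ᵐ y ∂ν, ∫⁻ x, K x y ∂μ ≤ C)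
    {f : X → ℝ≥0∞} {g : Y → ℝ≥0∞} (hf : Measurable f) (hg : Measurable g) :
    2 * ∫⁻ x, ∫⁻ y, K x y * f x * g y ∂ν ∂μ ≤ C * (∫⁻ x, f x ^ 2 ∂μ + ∫⁻ y, g y ^ 2 ∂ν) := by
  have amgm : ∀ x y, 2 * (K x y * f x * g y) ≤ K x y * f x ^ 2 + K x y * g y ^ 2 := fun x y =>
    calc 2 * (K x y * f x * g y) = K x y * (2 * f x * g y) := by ring
      _ ≤ K x y * (f x ^ 2 + g y ^ 2) := by gcongr; exact ENNReal.two_mul_le_add_sq _ _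
      _ = K x y * f x ^ 2 + K x y * g y ^ 2 := mul_add _ _ _
  calc 2 * ∫⁻ x, ∫⁻ y, K x y * f x * g y ∂ν ∂μ
      = ∫⁻ x, ∫⁻ y, 2 * (K x y * f x * g y) ∂ν ∂μ := by
        simp only [lintegral_const_mul' _ _ ofNat_ne_top]
    _ ≤ ∫⁻ x, ∫⁻ y, (K x y * f x ^ 2 + K x y * g y ^ 2) ∂ν ∂μ := by gcongr with x y; exact amgm x y
    _ = ∫⁻ x, ∫⁻ y, K x y * f x ^ 2 ∂ν ∂μ + ∫⁻ y, ∫⁻ x, K x y * g y ^ 2 ∂μ ∂ν := by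
        have hKf : Measurable (uncurry fun x y => K x y * f x ^ 2) :=
          hK.mul ((hf.pow_const 2).comp measurable_fst)
        have hKg : Measurable (uncurry fun x y => K x y * g y ^ 2) :=
          hK.mul ((hg.pow_const 2).comp measurable_snd)
        rw [← lintegral_lintegral_swap hKg.aemeasurable,
          ← lintegral_add_left hKf.lintegral_prod_right]
        exact lintegral_congr fun x => lintegral_add_left (hK.of_uncurry_left.mul_const _) _
    _ = ∫⁻ x, (∫⁻ y, K x y ∂ν) * f x ^ 2 ∂μ + ∫⁻ y, (∫⁻ x, K x y ∂μ) * g y ^ 2 ∂ν := by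
        congr 1 <;> refine lintegral_congr fun _ => lintegral_mul_const _ ?_
        exacts [hK.of_uncurry_left, hK.of_uncurry_right]
    _ ≤ ∫⁻ x, C * f x ^ 2 ∂μ + ∫⁻ y, C * g y ^ 2 ∂ν := by
        gcongr ?_ + ?_
        · exact lintegral_mono_ae (hrow.mono fun x hx => by gcongr)
        · exact lintegral_mono_ae (hcol.mono fun y hy => by gcongr)
    _ = C * (∫⁻ x, f x ^ 2 ∂μ + ∫⁻ y, g y ^ 2 ∂ν) := by
        rw [lintegral_const_mul _ (hf.pow_const 2), lintegral_const_mul _ (hg.pow_const 2), mul_add]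

end SchurTest

section PowerLengthKernel

variable {E : Type*} [NormedAddCommGroup E]

noncomputable def powerLengthKernel (r : E → ℝ) (α : ℝ) (x y : E) : ℝ≥0∞ :=
  ENNReal.ofReal (‖x - y‖ ^ α * if ‖x - y‖ ≤ r x + r y then 1 else 0)

lemma powerLengthKernel_comm (r : E → ℝ) (α : ℝ) (x y : E) :
    powerLengthKernel r α x y = powerLengthKernel r α y x := by
  rw [powerLengthKernel, powerLengthKernel, norm_sub_rev, add_comm (r x)]

lemma measurable_powerLengthKernel [MeasurableSpace E] [OpensMeasurableSpace E] [MeasurableSub₂ E]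
    {r : E → ℝ} (hr : Measurable r) (α : ℝ) : Measurable (uncurry (powerLengthKernel r α)) := by
  have hdist : Measurable fun p : E × E => ‖p.1 - p.2‖ := (measurable_fst.sub measurable_snd).norm
  refine (Measurable.mul (hdist.pow_const α) (Measurable.ite ?_ measurable_const measurable_const))
    |>.ennreal_ofReal
  exact measurableSet_le hdist ((hr.comp measurable_fst).add (hr.comp measurable_snd))

lemma powerLengthKernel_mul_enorm_mul_enorm (r : E → ℝ) (α : ℝ) (x y : E) (a b : ℝ) :
    powerLengthKernel r α x y * ‖a‖ₑ * ‖b‖ₑ =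
      ENNReal.ofReal (‖x - y‖ ^ α * (if ‖x - y‖ ≤ r x + r y then 1 else 0) * |a| * |b|) := by
  have hK : 0 ≤ ‖x - y‖ ^ α * if ‖x - y‖ ≤ r x + r y then (1 : ℝ) else 0 := by positivity
  rw [ENNReal.ofReal_mul (by positivity), ENNReal.ofReal_mul hK, powerLengthKernel,
    Real.enorm_eq_ofReal_abs, Real.enorm_eq_ofReal_abs]

variable {r : E → ℝ} {M β : ℝ}

lemma norm_sub_le_mul_of_le_add (hrM : ∀ x, r x ≤ M)
    (hreg : ∀ x v, ‖v‖ ≤ 2 * M → r (x + v) ≤ (β - 1) * r x) {x y : E}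
    (hxy : ‖x - y‖ ≤ r x + r y) : ‖x - y‖ ≤ β * r x := by
  have hyx : ‖y - x‖ ≤ 2 * M := by rw [norm_sub_rev]; linarith [hrM x, hrM y]
  have hry : r y ≤ (β - 1) * r x := by simpa using hreg x (y - x) hyx
  linarith

lemma lintegral_powerLengthKernel_le [MeasurableSpace E] [OpensMeasurableSpace E]
    (μ : Measure E) (hr0 : ∀ x, 0 ≤ r x) (hrM : ∀ x, r x ≤ M)
    (hreg : ∀ x v, ‖v‖ ≤ 2 * M → r (x + v) ≤ (β - 1) * r x) (hβ : 0 ≤ β) {α : ℝ} (hα : 0 ≤ α)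
    (x : E) :
    ∫⁻ y, powerLengthKernel r α x y ∂μ ≤
      ENNReal.ofReal (β ^ α) * (ENNReal.ofReal (r x ^ α) * μ (closedBall x (β * r x))) := by
  have hK : ∀ y, powerLengthKernel r α x y ≤
      (closedBall x (β * r x)).indicator (fun _ => ENNReal.ofReal ((β * r x) ^ α)) y := by
    intro y
    by_cases hxy : ‖x - y‖ ≤ r x + r y
    · have hball := norm_sub_le_mul_of_le_add hrM hreg hxy
      rw [Set.indicator_of_mem (by rwa [mem_closedBall, dist_comm, dist_eq_norm]),
        powerLengthKernel, if_pos hxy, mul_one]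
      gcongr
    · simp [powerLengthKernel, if_neg hxy]
  calc ∫⁻ y, powerLengthKernel r α x y ∂μ
      ≤ ∫⁻ y, (closedBall x (β * r x)).indicator (fun _ => ENNReal.ofReal ((β * r x) ^ α)) y ∂μ :=
        lintegral_mono hK
    _ = ENNReal.ofReal (β ^ α) * (ENNReal.ofReal (r x ^ α) * μ (closedBall x (β * r x))) := by
        rw [lintegral_indicator measurableSet_closedBall, setLIntegral_const,
          mul_rpow hβ (hr0 x), ENNReal.ofReal_mul (rpow_nonneg hβ α), mul_assoc]

end PowerLengthKernel

theorem stmt_7_general (N : ℕ)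
    (lam : Measure (EuclideanSpace ℝ (Fin N))) [SigmaFinite lam]
    (M : ℝ)
    (r : EuclideanSpace ℝ (Fin N) → ℝ) (hrmeas : Measurable r)
    (hrpos : ∀ x, 0 < r x) (hrM : ∀ x, r x ≤ M)
    (β : ℝ) (hβ : 2 ≤ β)
    (hreg : ∀ x v, ‖v‖ ≤ 2 * M → r (x + v) ≤ (β - 1) * r x)
    (α : ℝ) (hα : 0 ≤ α)
    (φ ψ : EuclideanSpace ℝ (Fin N) → ℝ) (hφ : Measurable φ) (hψ : Measurable ψ)
    (hφ2 : (∫⁻ x, ENNReal.ofReal (φ x ^ 2) ∂lam) ≤ 1)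
    (hψ2 : (∫⁻ x, ENNReal.ofReal (ψ x ^ 2) ∂lam) ≤ 1) :
    (∫⁻ x, ∫⁻ y, ENNReal.ofReal (‖x - y‖ ^ α *
        (if ‖x - y‖ ≤ r x + r y then (1 : ℝ) else 0) * |φ x| * |ψ y|) ∂lam ∂lam) ≤
      ENNReal.ofReal (β ^ α) *
        essSup (fun x => ENNReal.ofReal (r x ^ α) * lam (Metric.closedBall x (β * r x)))
          lam := by
  set C := ENNReal.ofReal (β ^ α) *
    essSup (fun x => ENNReal.ofReal (r x ^ α) * lam (closedBall x (β * r x))) lam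
  have hrow : ∀ᵐ x ∂lam, ∫⁻ y, powerLengthKernel r α x y ∂lam ≤ C := by
    filter_upwards [ae_le_essSup (fun x => ENNReal.ofReal (r x ^ α) * lam (closedBall x (β * r x)))]
      with x hx
    exact (lintegral_powerLengthKernel_le lam (fun x => (hrpos x).le) hrM hreg (by linarith) hα
      x).trans (mul_le_mul_right hx _)
  have hcol : ∀ᵐ y ∂lam, ∫⁻ x, powerLengthKernel r α x y ∂lam ≤ C := by
    simpa only [powerLengthKernel_comm r α _] using hrow
  have hsq : ∀ t : ℝ, ENNReal.ofReal (t ^ 2) = ‖t‖ₑ ^ 2 := fun t => by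
    rw [Real.enorm_eq_ofReal_abs, ← ENNReal.ofReal_pow (abs_nonneg t), sq_abs]
  have hschur := lintegral_lintegral_mul_le_of_schur (measurable_powerLengthKernel hrmeas α)
    hrow hcol hφ.enorm hψ.enorm
  simp only [powerLengthKernel_mul_enorm_mul_enorm, ← hsq] at hschur
  rw [← ENNReal.mul_le_mul_iff_right (a := 2) two_ne_zero ofNat_ne_top]
  refine hschur.trans ?_
  calc _ ≤ C * (1 + 1) := by gcongr
    _ = 2 * C := by rw [one_add_one_eq_two, mul_comm]

/-- Bound on the `‖·‖_{{1}{2}}` norm of the power length kernel: for `φ, ψ` in the unit ball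
of `L_2(λ)`,
`∫∫ |x-y|^α 1{|x-y| ≤ r(x)+r(y)} |φ(x)||ψ(y)| dλ(y)dλ(x)
   ≤ β^α esssup_x ( r(x)^α λ(B̄(x, β r(x))) )`. -/
theorem stmt_7 (N : ℕ) (hN : 1 ≤ N)
    (lam : Measure (EuclideanSpace ℝ (Fin N))) [SigmaFinite lam]
    (M : ℝ) (hM : 0 < M)
    (r : EuclideanSpace ℝ (Fin N) → ℝ) (hrmeas : Measurable r)
    (hrpos : ∀ x, 0 < r x) (hrM : ∀ x, r x ≤ M)
    (β : ℝ) (hβ : 2 ≤ β)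
    (hreg : ∀ x v, ‖v‖ ≤ 2 * M → r (x + v) ≤ (β - 1) * r x)
    (α : ℝ) (hα : 0 ≤ α)
    (φ ψ : EuclideanSpace ℝ (Fin N) → ℝ) (hφ : Measurable φ) (hψ : Measurable ψ)
    (hφ2 : (∫⁻ x, ENNReal.ofReal (φ x ^ 2) ∂lam) ≤ 1)
    (hψ2 : (∫⁻ x, ENNReal.ofReal (ψ x ^ 2) ∂lam) ≤ 1) :
    (∫⁻ x, ∫⁻ y, ENNReal.ofReal (‖x - y‖ ^ α *
        (if ‖x - y‖ ≤ r x + r y then (1 : ℝ) else 0) * |φ x| * |ψ y|) ∂lam ∂lam) ≤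
      ENNReal.ofReal (β ^ α) *
        essSup (fun x => ENNReal.ofReal (r x ^ α) * lam (Metric.closedBall x (β * r x)))
          lam :=
  stmt_7_general N lam M r hrmeas hrpos hrM β hβ hreg α hα φ ψ hφ hψ hφ2 hψ2
end

section
/- Let ρ > 0 and T > 0. Then ∫_{ℝ^2 ∖ [0,T]^2} f_2(x_1, x_2)^2 dx_1 dx_2 ≤ 1/ρ^2, where the integral over the complement of the square [0,T]^2 is with respect to two-dimensional Lebesgue measure. -/
open Real MeasureTheory ENNReal

/-- The second chaos kernel of the quadratic functional of the Ornstein–Uhlenbeck Lévy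
process. -/
noncomputable def ouKernel (ρ T x₁ x₂ : ℝ) : ℝ :=
  (if x₁ ≤ T then (1 : ℝ) else 0) * (if x₂ ≤ T then (1 : ℝ) else 0) *
    Real.exp (ρ * (x₁ + x₂)) *
    ((1 - Real.exp (-2 * ρ * T)) * (if max x₁ x₂ ≤ 0 then (1 : ℝ) else 0) +
      (Real.exp (-2 * ρ * max x₁ x₂) - Real.exp (-2 * ρ * T)) *
        (if 0 < max x₁ x₂ then (1 : ℝ) else 0))

/-!
Off the square `[0,T]²` the kernel vanishes unless one coordinate is negative, and then
`f₂(x₁,x₂) ≤ e^{ρ(x₁+x₂) - 2ρ max(x₁,x₂,0)} = e^{-ρ(|x₁|+|x₂|)}`. Hence `f₂²` is dominated by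
the product density `e^{-2ρ|x₁|} e^{-2ρ|x₂|}`, whose integral over the plane is `(1/ρ)²`.
-/

lemma add_sub_two_mul_max_max_zero {x y : ℝ} (h : min x y ≤ 0) :
    x + y - 2 * max (max x y) 0 = -(|x| + |y|) := by
  grind

lemma ouKernel_eq_of_le {ρ T x y : ℝ} (hx : x ≤ T) (hy : y ≤ T) :
    ouKernel ρ T x y =
      exp (ρ * (x + y)) * (exp (-2 * ρ * max (max x y) 0) - exp (-2 * ρ * T)) := by
  by_cases h : max x y ≤ 0
  · simp [ouKernel, hx, hy, h, not_lt.2 h]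
  · simp [ouKernel, hx, hy, h, max_eq_left (not_le.1 h).le, not_le.1 h]

lemma ouKernel_eq_zero {ρ T x y : ℝ} (h : ¬(x ≤ T ∧ y ≤ T)) : ouKernel ρ T x y = 0 := by
  rcases not_and_or.1 h with h | h <;> simp [ouKernel, h]

lemma ouKernel_sq_le_of_notMem {ρ T : ℝ} (hρ : 0 ≤ ρ) (hT : 0 ≤ T) {p : ℝ × ℝ}
    (hp : p ∉ Set.Icc 0 T ×ˢ Set.Icc 0 T) :
    ouKernel ρ T p.1 p.2 ^ 2 ≤ exp (-(2 * ρ) * |p.1|) * exp (-(2 * ρ) * |p.2|) := by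
  obtain ⟨x, y⟩ := p
  by_cases hxy : x ≤ T ∧ y ≤ T
  · have hmin : min x y ≤ 0 := by
      by_contra! h
      exact hp ⟨⟨(lt_min_iff.1 h).1.le, hxy.1⟩, ⟨(lt_min_iff.1 h).2.le, hxy.2⟩⟩
    set m := max (max x y) 0
    have hmT : m ≤ T := max_le (max_le hxy.1 hxy.2) hT
    have hdiff : 0 ≤ exp (-2 * ρ * m) - exp (-2 * ρ * T) :=
      sub_nonneg.2 (exp_le_exp.2 (by nlinarith))
    have hle : exp (ρ * (x + y)) * (exp (-2 * ρ * m) - exp (-2 * ρ * T)) ≤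
        exp (ρ * (x + y)) * exp (-2 * ρ * m) :=
      mul_le_mul_of_nonneg_left (sub_le_self _ (exp_pos _).le) (exp_pos _).le
    rw [ouKernel_eq_of_le hxy.1 hxy.2]
    calc _ ≤ (exp (ρ * (x + y)) * exp (-2 * ρ * m)) ^ 2 :=
          pow_le_pow_left₀ (by positivity) hle 2
      _ = exp (-(2 * ρ) * |x|) * exp (-(2 * ρ) * |y|) := by
          rw [← exp_add, sq, ← exp_add, ← exp_add]
          congr 1
          linear_combination (2 * ρ) * add_sub_two_mul_max_max_zero hmin
  · rw [ouKernel_eq_zero hxy, zero_pow two_ne_zero]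
    positivity

lemma integral_exp_neg_mul_abs {c : ℝ} (hc : 0 < c) : ∫ x, exp (-c * |x|) = 2 / c := by
  rw [integral_comp_abs (f := fun x => exp (-c * x)), integral_exp_mul_Ioi (neg_lt_zero.2 hc)]
  field_simp
  simp

lemma lintegral_exp_neg_mul_abs {c : ℝ} (hc : 0 < c) :
    ∫⁻ x, ENNReal.ofReal (exp (-c * |x|)) = ENNReal.ofReal (2 / c) := by
  have hint : Integrable fun x : ℝ => exp (-c * |x|) :=
    .of_integral_ne_zero (by rw [integral_exp_neg_mul_abs hc]; positivity)
  rw [← ofReal_integral_eq_lintegral_ofReal hint (.of_forall fun _ => (exp_pos _).le),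
    integral_exp_neg_mul_abs hc]

lemma lintegral_prod_exp_neg_mul_abs {c : ℝ} (hc : 0 < c) :
    ∫⁻ p : ℝ × ℝ, ENNReal.ofReal (exp (-c * |p.1|) * exp (-c * |p.2|)) =
      ENNReal.ofReal ((2 / c) ^ 2) := by
  have hmeas : Measurable fun x : ℝ => ENNReal.ofReal (exp (-c * |x|)) := by fun_prop
  simp_rw [ENNReal.ofReal_mul (exp_pos _).le]
  rw [Measure.volume_eq_prod, lintegral_prod_mul hmeas.aemeasurable hmeas.aemeasurable,
    lintegral_exp_neg_mul_abs hc, ← ENNReal.ofReal_mul (by positivity), sq]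

/-- `∫_{ℝ² ∖ [0,T]²} f₂(x₁,x₂)² dx₁ dx₂ ≤ 1/ρ²`. -/
theorem stmt_13 (ρ T : ℝ) (hρ : 0 < ρ) (hT : 0 < T) :
    (∫⁻ p : ℝ × ℝ in (Set.Icc (0 : ℝ) T ×ˢ Set.Icc (0 : ℝ) T)ᶜ,
        ENNReal.ofReal ((ouKernel ρ T p.1 p.2) ^ 2)) ≤
      ENNReal.ofReal (1 / ρ ^ 2) := by
  calc _ ≤ ∫⁻ p : ℝ × ℝ in (Set.Icc (0 : ℝ) T ×ˢ Set.Icc (0 : ℝ) T)ᶜ,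
          ENNReal.ofReal (exp (-(2 * ρ) * |p.1|) * exp (-(2 * ρ) * |p.2|)) :=
        setLIntegral_mono' (measurableSet_Icc.prod measurableSet_Icc).compl fun p hp =>
          ENNReal.ofReal_le_ofReal (ouKernel_sq_le_of_notMem hρ.le hT.le hp)
    _ ≤ ∫⁻ p : ℝ × ℝ, ENNReal.ofReal (exp (-(2 * ρ) * |p.1|) * exp (-(2 * ρ) * |p.2|)) :=
        setLIntegral_le_lintegral _ _
    _ = ENNReal.ofReal (1 / ρ ^ 2) := by
        rw [lintegral_prod_exp_neg_mul_abs (by positivity)]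
        congr 1
        field_simp
end
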